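/- The left KG-module KG ⊗_{G_par} K_par G is isomorphic to KG ⊗_K B via g ⊗_{G_par} [h]u ↦ gh ⊗ e_{h^{-1}}u (u an idempotent of S(G)); in particular KG ⊗_{G_par} K_par G is free as a left KG-module. -/

import Mathlib

/-!
Exel's monoid `S(G)` is graded by `G` via `degree : [g] ↦ g`, and every `s ∈ S(G)` factors as
`s = [degree s] u` with `u = [degree s]⁻¹ s` in the submonoid generated by the idempotents
`e_g`; the elements of this submonoid form a `K`-basis of `B`. The gluing relation moves
`[degree s]` to the left factor, so `1 ⊗ [s] = degree s ⊗ u` in `KG ⊗_{G_par} K_par G`.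
Conversely `x ⊗ [s] ↦ x · degree s ⊗ u` respects the gluing relations, because
`degree ([h] s) = h · degree s` and `[h · degree s]⁻¹ [h] s = [degree s]⁻¹ e_{h⁻¹} s`.
The two maps are mutually inverse, and `KG ⊗_K B` is free over `KG` because `B` is free over `K`.
-/

/-- The defining relations of Exel's semigroup `S(G)` of a group `G`:
`[1] = 1`, `[s⁻¹][s][t] = [s⁻¹][st]`, `[s][t][t⁻¹] = [st][t⁻¹]`. -/
inductive ExelRel (G : Type*) [Group G] : FreeMonoid G → FreeMonoid G → Prop
  | one : ExelRel G (FreeMonoid.of 1) 1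
  | left (s t : G) : ExelRel G
      (FreeMonoid.of s⁻¹ * FreeMonoid.of s * FreeMonoid.of t)
      (FreeMonoid.of s⁻¹ * FreeMonoid.of (s * t))
  | right (s t : G) : ExelRel G
      (FreeMonoid.of s * FreeMonoid.of t * FreeMonoid.of t⁻¹)
      (FreeMonoid.of (s * t) * FreeMonoid.of t⁻¹)

/-- The congruence on the free monoid on `G` generated by the Exel relations. -/
def ExelCon (G : Type*) [Group G] : Con (FreeMonoid G) := conGen (ExelRel G)

/-- Exel's semigroup (an inverse monoid) `S(G)` of the group `G`. -/
abbrev ExelMonoid (G : Type*) [Group G] := (ExelCon G).Quotient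

/-- The canonical generator `[g]` of `S(G)`. -/
def ExelMonoid.of {G : Type*} [Group G] (g : G) : ExelMonoid G :=
  (ExelCon G).mk' (FreeMonoid.of g)

/-- The idempotent `e_g := [g][g⁻¹]` in `S(G)`. -/
def ExelMonoid.e {G : Type*} [Group G] (g : G) : ExelMonoid G :=
  ExelMonoid.of g * ExelMonoid.of g⁻¹

/-- The partial group algebra `K_par G`: the semigroup `K`-algebra of Exel's semigroup. -/
abbrev KparG (K G : Type*) [CommRing K] [Group G] := MonoidAlgebra K (ExelMonoid G)

/-- The canonical generator `[g]` of `K_par G`. -/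
noncomputable def pr (K : Type*) {G : Type*} [CommRing K] [Group G] (g : G) : KparG K G :=
  MonoidAlgebra.of K (ExelMonoid G) (ExelMonoid.of g)

/-- The idempotent `e_g := [g][g⁻¹]` in `K_par G`. -/
noncomputable def eK (K : Type*) {G : Type*} [CommRing K] [Group G] (g : G) : KparG K G :=
  pr K g * pr K g⁻¹

open TensorProduct

/-- The group algebra `KG`. -/
abbrev KG (K G : Type*) [CommRing K] [Group G] := MonoidAlgebra K G

/-- The relation `KG`-submodule of `KG ⊗[K] M` defining `KG ⊗_{G_par} M` for a left
`K_par G`-module `M` with its induced partial action: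
generated by the elements `g ⊗ [h]·m − gh ⊗ e_{h⁻¹}·m`. -/
noncomputable def glueRel (K G M : Type*) [CommRing K] [Group G]
    [AddCommGroup M] [Module K M] [Module (KparG K G) M] [IsScalarTower K (KparG K G) M] :
    Submodule (KG K G) (KG K G ⊗[K] M) :=
  Submodule.span (KG K G) {w : KG K G ⊗[K] M | ∃ (g h : G) (m : M),
    w = MonoidAlgebra.of K G g ⊗ₜ[K] (pr K h • m) -
      MonoidAlgebra.of K G (g * h) ⊗ₜ[K] (eK K h⁻¹ • m)}

/-- The universal globalization `Λ(M) = KG ⊗_{G_par} M` of a left `K_par G`-module `M`. -/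
noncomputable abbrev Glob (K G M : Type*) [CommRing K] [Group G]
    [AddCommGroup M] [Module K M] [Module (KparG K G) M] [IsScalarTower K (KparG K G) M] :=
  KG K G ⊗[K] M ⧸ glueRel K G M

/-- `B`, the subalgebra of `K_par G` generated by the idempotents `e_g`. -/
noncomputable def Bsub (K G : Type*) [CommRing K] [Group G] : Subalgebra K (KparG K G) :=
  Algebra.adjoin K (Set.range fun g : G => eK K g)

theorem eK_mem_Bsub (K : Type*) {G : Type*} [CommRing K] [Group G] (g : G) :
    eK K g ∈ Bsub K G :=
  Algebra.subset_adjoin ⟨g, rfl⟩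

namespace ExelMonoid

variable {G : Type*} [Group G]

theorem mk'_eq_mk'_of_rel {x y : FreeMonoid G} (h : ExelRel G x y) :
    (ExelCon G).mk' x = (ExelCon G).mk' y :=
  (Con.eq _).mpr (ConGen.Rel.of x y h)

@[simp] theorem of_one : of (1 : G) = 1 := by
  simpa [of] using mk'_eq_mk'_of_rel (ExelRel.one (G := G))

theorem of_inv_mul_of_mul_of (s t : G) : of s⁻¹ * of s * of t = of s⁻¹ * of (s * t) := by
  simpa [of, map_mul] using mk'_eq_mk'_of_rel (ExelRel.left s t)

theorem of_mul_of_mul_of_inv (s t : G) : of s * of t * of t⁻¹ = of (s * t) * of t⁻¹ := by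
  simpa [of, map_mul] using mk'_eq_mk'_of_rel (ExelRel.right s t)

theorem e_mul_of (g : G) : e g * of g = of g := by
  simpa [e] using of_mul_of_mul_of_inv g g⁻¹

theorem of_mul_of (g h : G) : of g * of h = of (g * h) * (of h⁻¹ * of h) := by
  conv_lhs => rw [← e_mul_of h, e, ← mul_assoc, ← mul_assoc, of_mul_of_mul_of_inv]
  rw [mul_assoc]

theorem e_mul_mul_of (g h : G) : e (g * h) * of g = of g * e h := by
  have h' := of_inv_mul_of_mul_of (h⁻¹ * g⁻¹) g
  simp only [mul_inv_rev, inv_inv, inv_mul_cancel_right] at h'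
  rw [e, e, mul_inv_rev, h', ← mul_assoc, of_mul_of_mul_of_inv]

def degree : ExelMonoid G →* G :=
  Con.lift _ (FreeMonoid.lift id) <| Con.conGen_le.mpr fun x y h => by
    cases h <;> simp [Con.ker_rel, map_mul, mul_assoc]

@[simp] theorem degree_of (g : G) : degree (of g) = g :=
  rfl

@[simp] theorem degree_e (g : G) : degree (e g) = 1 := by
  simp [e]

@[simp] theorem e_one : e (1 : G) = 1 := by
  simp [e]

theorem induction_on_of_mul {p : ExelMonoid G → Prop} (s : ExelMonoid G) (one : p 1)
    (of_mul : ∀ g s, p s → p (of g * s)) : p s := by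
  induction s using Con.induction_on with
  | H w =>
    induction w using FreeMonoid.recOn with
    | one => exact one
    | of_mul g w ih => exact of_mul g _ ih

theorem e_degree_mul (s : ExelMonoid G) : e (degree s) * s = s := by
  induction s using induction_on_of_mul with
  | one => simp
  | of_mul g s ih => rw [map_mul, degree_of, ← mul_assoc, e_mul_mul_of, mul_assoc, ih]

def idempotents (G : Type*) [Group G] : Submonoid (ExelMonoid G) :=
  Submonoid.closure (Set.range e)

theorem e_mem_idempotents (g : G) : e g ∈ idempotents G :=
  Submonoid.subset_closure ⟨g, rfl⟩

theorem degree_eq_one_of_mem_idempotents {s : ExelMonoid G} (hs : s ∈ idempotents G) :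
    degree s = 1 := by
  induction hs using Submonoid.closure_induction with
  | mem x hx => obtain ⟨g, rfl⟩ := hx; simp
  | one => simp
  | mul x y _ _ hx hy => rw [map_mul, hx, hy, one_mul]

def idemPart (s : ExelMonoid G) : ExelMonoid G :=
  of (degree s)⁻¹ * s

theorem of_degree_mul_idemPart (s : ExelMonoid G) : of (degree s) * idemPart s = s := by
  rw [idemPart, ← mul_assoc]; exact e_degree_mul s

theorem e_inv_degree_mul_idemPart (s : ExelMonoid G) :
    e (degree s)⁻¹ * idemPart s = idemPart s := by
  rw [idemPart, ← mul_assoc, e_mul_of]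

theorem idemPart_of_mem_idempotents {s : ExelMonoid G} (hs : s ∈ idempotents G) :
    idemPart s = s := by
  simp [idemPart, degree_eq_one_of_mem_idempotents hs]

theorem idemPart_of_mul (h : G) (s : ExelMonoid G) :
    idemPart (of h * s) = idemPart (e h⁻¹ * s) := by
  simp only [idemPart, map_mul, degree_of, degree_e, one_mul]
  rw [mul_inv_rev, ← mul_assoc, of_mul_of, inv_mul_cancel_right, e, inv_inv, mul_assoc]

theorem idemPart_e_mul (x : G) (s : ExelMonoid G) :
    idemPart (e x * s) = e (degree s)⁻¹ * e ((degree s)⁻¹ * x) * idemPart s := by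
  have hx := e_mul_mul_of (degree s) ((degree s)⁻¹ * x)
  rw [mul_inv_cancel_left] at hx
  calc idemPart (e x * s) = of (degree s)⁻¹ * (e x * of (degree s) * idemPart s) := by
        rw [mul_assoc, of_degree_mul_idemPart, idemPart, map_mul, degree_e, one_mul]
    _ = e (degree s)⁻¹ * e ((degree s)⁻¹ * x) * idemPart s := by
        rw [hx]; simp only [e, inv_inv, mul_assoc]

theorem idemPart_mem_idempotents (s : ExelMonoid G) : idemPart s ∈ idempotents G := by
  induction s using induction_on_of_mul with
  | one => simp [idemPart, one_mem]
  | of_mul g s ih =>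
    rw [idemPart_of_mul, idemPart_e_mul]
    exact mul_mem (mul_mem (e_mem_idempotents _) (e_mem_idempotents _)) ih

end ExelMonoid

section Globalization

open ExelMonoid

variable (K : Type*) [CommRing K] {G : Type*} [Group G]

local notation "ofS" => MonoidAlgebra.of K (ExelMonoid G)

local notation "ofG" => MonoidAlgebra.of K G

theorem of_e_eq_eK (g : G) : ofS (e g) = eK K g := by
  simp [e, eK, pr]

theorem Bsub_eq_span :
    Subalgebra.toSubmodule (Bsub K G) =
      Submodule.span K (Set.range fun s : idempotents G => ofS s) := by
  have hgen : Set.range (eK K (G := G)) = ofS '' Set.range e := by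
    rw [← Set.range_comp]; exact congrArg Set.range (funext fun g => (of_e_eq_eK K g).symm)
  rw [Bsub, Algebra.adjoin_eq_span, hgen, ← MonoidHom.map_mclosure, Submonoid.coe_map,
    Set.image_eq_range]
  rfl

theorem of_mem_Bsub {s : ExelMonoid G} (hs : s ∈ idempotents G) : ofS s ∈ Bsub K G := by
  rw [← Subalgebra.mem_toSubmodule, Bsub_eq_span]
  exact Submodule.subset_span ⟨⟨s, hs⟩, rfl⟩

theorem linearIndependent_of_idempotents :
    LinearIndependent K fun s : idempotents G => ofS s :=
  (MonoidAlgebra.basis (ExelMonoid G) K).linearIndependent.comp _ Subtype.val_injective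

noncomputable def basisBsub : Module.Basis (idempotents G) K (Bsub K G) :=
  (Module.Basis.span (linearIndependent_of_idempotents K)).map
    (LinearEquiv.ofEq _ _ (Bsub_eq_span K).symm)

theorem coe_basisBsub (s : idempotents G) : (basisBsub K s : KparG K G) = ofS s :=
  congrArg Subtype.val (Module.Basis.span_apply (linearIndependent_of_idempotents K) s)

instance : Module.Free K (Bsub K G) :=
  .of_basis (basisBsub K)

noncomputable def degreeSplit : KparG K G →ₗ[K] KG K G ⊗[K] Bsub K G :=
  (MonoidAlgebra.basis (ExelMonoid G) K).constr K fun s =>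
    ofG (degree s) ⊗ₜ ⟨ofS (idemPart s), of_mem_Bsub K (idemPart_mem_idempotents s)⟩

theorem degreeSplit_of (s : ExelMonoid G) :
    degreeSplit K (ofS s) =
      ofG (degree s) ⊗ₜ ⟨ofS (idemPart s), of_mem_Bsub K (idemPart_mem_idempotents s)⟩ :=
  (MonoidAlgebra.basis (ExelMonoid G) K).constr_basis K _ s

theorem degreeSplit_pr_mul (h : G) (m : KparG K G) :
    degreeSplit K (pr K h * m) = ofG h • degreeSplit K (eK K h⁻¹ * m) := by
  induction m using MonoidAlgebra.induction_on with
  | of s =>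
    rw [pr, ← of_e_eq_eK, ← map_mul, ← map_mul, degreeSplit_of, degreeSplit_of, smul_tmul',
      smul_eq_mul, ← map_mul]
    congr 2
    · simp
    · rw [idemPart_of_mul]
  | add x y hx hy => rw [mul_add, mul_add, map_add, map_add, hx, hy, smul_add]
  | smul k x hx => rw [mul_smul_comm, mul_smul_comm, map_smul, map_smul, hx, smul_comm]

theorem degreeSplit_of_mem_Bsub (u : KparG K G) (hu : u ∈ Bsub K G) :
    degreeSplit K u = (1 : KG K G) ⊗ₜ ⟨u, hu⟩ := by
  suffices (degreeSplit K).comp (Bsub K G).val.toLinearMap = TensorProduct.mk K _ _ 1 from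
    LinearMap.congr_fun this ⟨u, hu⟩
  refine (basisBsub K).ext fun s => ?_
  have hs : (basisBsub K s) = ⟨ofS s, of_mem_Bsub K s.2⟩ := Subtype.ext (coe_basisBsub K s)
  rw [LinearMap.comp_apply, hs, TensorProduct.mk_apply]
  show degreeSplit K (ofS s) = _
  simp only [degreeSplit_of, degree_eq_one_of_mem_idempotents s.2,
    idemPart_of_mem_idempotents s.2, map_one]

noncomputable def tensorDegreeSplit : KG K G ⊗[K] KparG K G →ₗ[KG K G] KG K G ⊗[K] Bsub K G :=
  AlgebraTensorModule.lift (LinearMap.toSpanSingleton (KG K G) _ (degreeSplit K))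

theorem tensorDegreeSplit_tmul (x : KG K G) (m : KparG K G) :
    tensorDegreeSplit K (x ⊗ₜ m) = x • degreeSplit K m :=
  rfl

theorem glueRel_le_ker_tensorDegreeSplit :
    glueRel K G (KparG K G) ≤ LinearMap.ker (tensorDegreeSplit K) := by
  rw [glueRel, Submodule.span_le]
  rintro _ ⟨g, h, m, rfl⟩
  rw [SetLike.mem_coe, LinearMap.mem_ker, map_sub, tensorDegreeSplit_tmul, tensorDegreeSplit_tmul,
    smul_eq_mul, smul_eq_mul, degreeSplit_pr_mul, smul_smul, ← map_mul, sub_self]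

theorem mk_baseChange_degreeSplit (m : KparG K G) :
    Submodule.Quotient.mk ((Bsub K G).val.toLinearMap.baseChange (KG K G) (degreeSplit K m)) =
      (Submodule.Quotient.mk ((1 : KG K G) ⊗ₜ m) : Glob K G (KparG K G)) := by
  induction m using MonoidAlgebra.induction_on with
  | of s =>
    rw [degreeSplit_of, LinearMap.baseChange_tmul]
    refine ((Submodule.Quotient.eq _).mpr (Submodule.subset_span ?_)).symm
    refine ⟨1, degree s, ofS (idemPart s), ?_⟩
    rw [smul_eq_mul, smul_eq_mul, pr, ← map_mul, of_degree_mul_idemPart, ← of_e_eq_eK, ← map_mul,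
      e_inv_degree_mul_idemPart, one_mul, map_one]
    rfl
  | add x y hx hy =>
    rw [map_add, map_add, Submodule.Quotient.mk_add, hx, hy, tmul_add, Submodule.Quotient.mk_add]
  | smul k x hx =>
    rw [map_smul, LinearMap.map_smul_of_tower, Submodule.Quotient.mk_smul, hx, tmul_smul,
      Submodule.Quotient.mk_smul]

noncomputable def globEquiv : Glob K G (KparG K G) ≃ₗ[KG K G] KG K G ⊗[K] Bsub K G :=
  LinearEquiv.ofLinearMap
    ((glueRel K G (KparG K G)).liftQ _ (glueRel_le_ker_tensorDegreeSplit K))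
    ((glueRel K G (KparG K G)).mkQ ∘ₗ (Bsub K G).val.toLinearMap.baseChange (KG K G))
    (AlgebraTensorModule.ext fun x u => by
      simp only [LinearMap.comp_apply, Submodule.mkQ_apply, Submodule.liftQ_apply,
        LinearMap.baseChange_tmul, tensorDegreeSplit_tmul, AlgHom.toLinearMap_apply,
        Subalgebra.coe_val, LinearMap.id_apply]
      rw [degreeSplit_of_mem_Bsub K _ u.2, smul_tmul', smul_eq_mul, mul_one])
    (Submodule.linearMap_qext _ <| AlgebraTensorModule.ext fun x m => by
      simp only [LinearMap.comp_apply, Submodule.mkQ_apply, Submodule.liftQ_apply,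
        tensorDegreeSplit_tmul, map_smul, mk_baseChange_degreeSplit]
      rw [← Submodule.Quotient.mk_smul, smul_tmul', smul_eq_mul, mul_one]
      rfl)

theorem globEquiv_mk_tmul (x : KG K G) (m : KparG K G) :
    globEquiv K (Submodule.Quotient.mk (x ⊗ₜ m)) = x • degreeSplit K m :=
  rfl

end Globalization

set_option synthInstance.maxHeartbeats 1000000 in
/-- The left `KG`-module `KG ⊗_{G_par} K_par G` is isomorphic to `KG ⊗_K B` via
`g ⊗ [h]u ↦ gh ⊗ e_{h⁻¹}u` (`u ∈ B`); in particular `KG ⊗_{G_par} K_par G` is free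
as a left `KG`-module. -/
theorem glob_kparG_iso (K G : Type*) [CommRing K] [Group G] :
    (∃ φ : Glob K G (KparG K G) ≃ₗ[KG K G] (KG K G ⊗[K] Bsub K G),
      ∀ (g h : G) (u : KparG K G) (hu : u ∈ Bsub K G),
        φ (Submodule.Quotient.mk (MonoidAlgebra.of K G g ⊗ₜ[K] (pr K h * u))) =
          MonoidAlgebra.of K G (g * h) ⊗ₜ[K]
            (⟨eK K h⁻¹, eK_mem_Bsub K h⁻¹⟩ * ⟨u, hu⟩ : Bsub K G)) ∧
      Module.Free (KG K G) (Glob K G (KparG K G)) := by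
  refine ⟨⟨globEquiv K, fun g h u hu => ?_⟩, .of_equiv (globEquiv K).symm⟩
  rw [globEquiv_mk_tmul, degreeSplit_pr_mul, smul_smul, ← map_mul,
    degreeSplit_of_mem_Bsub K _ (mul_mem (eK_mem_Bsub K h⁻¹) hu), smul_tmul', smul_eq_mul, mul_one]
  rfl
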